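/- For every form u, S(H_q u)(z) = q^{-1}(H_{q^{-1}}(S(u)))(z) and (h_{q^{-1}} S(u))(z) = q · S(h_q u)(z), as identities of formal Laurent series in z^{-1}. -/

import Mathlib

open Polynomial

noncomputable section

namespace QLH

/-- A *form*: a linear functional on ℂ[x]. -/
abbrev PForm : Type := Polynomial ℂ →ₗ[ℂ] ℂ

private lemma divByMonic_add (d f g : Polynomial ℂ) (hd : d.Monic) :
    (f + g) /ₘ d = f /ₘ d + g /ₘ d := by
  apply mul_left_cancel₀ hd.ne_zero
  have h1 : d * (f /ₘ d) = f - f %ₘ d := by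
    rw [Polynomial.modByMonic_eq_sub_mul_div f d]; ring
  have h2 : d * (g /ₘ d) = g - g %ₘ d := by
    rw [Polynomial.modByMonic_eq_sub_mul_div g d]; ring
  have h3 : d * ((f + g) /ₘ d) = (f + g) - (f + g) %ₘ d := by
    rw [Polynomial.modByMonic_eq_sub_mul_div (f + g) d]; ring
  rw [mul_add, h1, h2, h3, Polynomial.add_modByMonic]
  ring

private lemma divByMonic_smul (d f : Polynomial ℂ) (a : ℂ) (hd : d.Monic) :
    (a • f) /ₘ d = a • (f /ₘ d) := by
  apply mul_left_cancel₀ hd.ne_zero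
  have h1 : d * (f /ₘ d) = f - f %ₘ d := by
    rw [Polynomial.modByMonic_eq_sub_mul_div f d]; ring
  have h3 : d * ((a • f) /ₘ d) = (a • f) - (a • f) %ₘ d := by
    rw [Polynomial.modByMonic_eq_sub_mul_div (a • f) d]; ring
  rw [h3, Polynomial.smul_modByMonic, mul_smul_comm, h1, smul_sub]

/-- `(h_a f)(x) = f (a x)`. -/
def hP (a : ℂ) : Polynomial ℂ →ₗ[ℂ] Polynomial ℂ :=
  (Polynomial.aeval (Polynomial.C a * Polynomial.X : Polynomial ℂ)).toLinearMap

/-- `(θ_c f)(x) = (f(x) - f(c))/(x - c)`. -/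
def thetaP (c : ℂ) : Polynomial ℂ →ₗ[ℂ] Polynomial ℂ where
  toFun f := (f - C (f.eval c)) /ₘ (X - C c)
  map_add' f g := by
    have h : f + g - C ((f + g).eval c)
        = (f - C (f.eval c)) + (g - C (g.eval c)) := by
      simp only [eval_add, C_add]; ring
    rw [h, divByMonic_add _ _ _ (monic_X_sub_C c)]
  map_smul' a f := by
    have h : a • f - C ((a • f).eval c) = a • (f - C (f.eval c)) := by
      simp only [eval_smul, smul_eq_mul, smul_sub, Polynomial.smul_C]
    rw [h, divByMonic_smul _ _ _ (monic_X_sub_C c)]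
    rfl

/-- `(H_q f)(x) = (f(qx) - f(x))/((q-1)x)`. -/
def HqP (q : ℂ) : Polynomial ℂ →ₗ[ℂ] Polynomial ℂ :=
  (q - 1)⁻¹ • (thetaP 0 ∘ₗ (hP q - LinearMap.id))

/-- `⟨h_a u, f⟩ = ⟨u, h_a f⟩`. -/
def hF (a : ℂ) (u : PForm) : PForm := u ∘ₗ hP a

/-- `⟨H_q u, f⟩ = -⟨u, H_q f⟩`. -/
def HqF (q : ℂ) (u : PForm) : PForm := -(u ∘ₗ HqP q)

/-- `⟨g u, f⟩ = ⟨u, g f⟩`. -/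
def mF (g : Polynomial ℂ) (u : PForm) : PForm := u ∘ₗ LinearMap.mulLeft ℂ g

/-- `⟨(x - c)⁻¹ u, f⟩ = ⟨u, θ_c f⟩`. -/
def divF (c : ℂ) (u : PForm) : PForm := u ∘ₗ thetaP c

/-- The Dirac form `δ_c`. -/
def deltaF (c : ℂ) : PForm := Polynomial.leval c

/-- Kernel used in the left product of a form by a polynomial. -/
def kern (u : PForm) (j : ℕ) : Polynomial ℂ :=
  ∑ i ∈ Finset.range (j + 1), C (u (X ^ (j - i))) * X ^ i

/-- The left product `f ↦ u f`, `(uf)(x) = ⟨u_ζ, (x f(x) - ζ f(ζ))/(x - ζ)⟩`. -/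
def lmul (u : PForm) : Polynomial ℂ →ₗ[ℂ] Polynomial ℂ where
  toFun f := f.sum fun j a => a • kern u j
  map_add' f g :=
    Polynomial.sum_add_index f g _ (fun i => zero_smul ℂ _) fun i b₁ b₂ => add_smul b₁ b₂ _
  map_smul' a f := by
    rw [Polynomial.sum_smul_index f a (fun j b => b • kern u j) fun i => zero_smul ℂ _]
    simp only [Polynomial.sum_def, mul_smul, ← Finset.smul_sum]
    rfl

/-- The Cauchy product of two forms: `⟨uv, f⟩ = ⟨u, v f⟩`. -/
def cF (u v : PForm) : PForm := u ∘ₗ lmul v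

/-- The q-difference equation `H_q(Φu) + Ψu + B(x⁻¹ u (h_q u)) = 0`. -/
def LHeq (q : ℂ) (u : PForm) (Φ Ψ B : Polynomial ℂ) : Prop :=
  HqF q (mF Φ u) + mF Ψ u + mF B (divF 0 (cF u (hF q u))) = 0

/-- A form is regular when it possesses a MOPS. -/
def IsRegular (u : PForm) : Prop :=
  ∃ P : ℕ → Polynomial ℂ, (∀ n, (P n).Monic) ∧ (∀ n, (P n).natDegree = n) ∧
    (∀ n, u (P n * P n) ≠ 0) ∧ ∀ m n, m ≠ n → u (P m * P n) = 0

/-- A regular form is q-semiclassical when it satisfies `H_q(Φu) + Ψu = 0`, `Φ` monic. -/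
def IsSemiclassical (q : ℂ) (u : PForm) : Prop :=
  IsRegular u ∧ ∃ Φ Ψ : Polynomial ℂ, Φ.Monic ∧ HqF q (mF Φ u) + mF Ψ u = 0

/-- A regular form is q-Laguerre–Hahn when it satisfies some equation `LHeq`. -/
def IsLaguerreHahn (q : ℂ) (u : PForm) : Prop :=
  IsRegular u ∧ ∃ Φ Ψ B : Polynomial ℂ, Φ.Monic ∧ LHeq q u Φ Ψ B

/-- `u` is of class `s`: `s` is the minimum of `max (deg Ψ - 1) (max (deg Φ) (deg B) - 2)`
over all q-difference equations `LHeq q u Φ Ψ B` (`Φ` monic) satisfied by `u`. -/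
def HasClass (q : ℂ) (u : PForm) (s : ℕ) : Prop :=
  (∃ Φ Ψ B : Polynomial ℂ, Φ.Monic ∧ LHeq q u Φ Ψ B ∧
      Φ.natDegree ≤ s + 2 ∧ B.natDegree ≤ s + 2 ∧ Ψ.natDegree ≤ s + 1) ∧
  ∀ t : ℕ, (∃ Φ Ψ B : Polynomial ℂ, Φ.Monic ∧ LHeq q u Φ Ψ B ∧
      Φ.natDegree ≤ t + 2 ∧ B.natDegree ≤ t + 2 ∧ Ψ.natDegree ≤ t + 1) → s ≤ t

/-- Formal Stieltjes series `S(u)(z) = -∑ (u)_n z^{-n-1}`, as a formal Laurent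
series in the variable `T = z⁻¹`. -/
def Sf (u : PForm) : LaurentSeries ℂ :=
  HahnSeries.ofPowerSeries ℤ ℂ (PowerSeries.mk fun n => if n = 0 then 0 else -u (X ^ (n - 1)))

/-- A polynomial `f(z)`, viewed as a formal Laurent series in `T = z⁻¹`. -/
def toLS (f : Polynomial ℂ) : LaurentSeries ℂ :=
  ∑ j ∈ Finset.range (f.natDegree + 1), HahnSeries.single (-(j : ℤ)) (f.coeff j)

/-- The Laurent series `z` (in the variable `T = z⁻¹`). -/
def zLS : LaurentSeries ℂ := HahnSeries.single (-1 : ℤ) 1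

/-- `(h_a F)(z) = F(az)` on formal Laurent series in `T = z⁻¹`. -/
def hLS (a : ℂ) (F : LaurentSeries ℂ) : LaurentSeries ℂ where
  coeff := fun k => a ^ (-k) * F.coeff k
  isPWO_support' := F.isPWO_support'.mono fun k hk => by
    simp only [Function.mem_support] at hk ⊢
    exact fun h => hk (by rw [h, mul_zero])

/-- `(H_q F)(z) = (F(qz) - F(z))/((q-1)z)` on formal Laurent series in `T = z⁻¹`. -/
def HqLS (q : ℂ) (F : LaurentSeries ℂ) : LaurentSeries ℂ :=
  HahnSeries.single (1 : ℤ) ((q - 1)⁻¹) * (hLS q F - F)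

/-! Everything is compared coefficientwise in `T = z⁻¹`: the coefficient of `T ^ (n + 1)` in
`S(u)` is `-(u)ₙ`, the moments transform as `(h_q u)ₙ = qⁿ (u)ₙ` and
`(H_q u)ₙ₊₁ = -[n + 1]_q (u)ₙ` with `[n]_q = (qⁿ - 1)/(q - 1)`, and `h_a` multiplies the
coefficient of `Tᵏ` by `a⁻ᵏ`. -/

lemma thetaP_zero_one : thetaP 0 (1 : Polynomial ℂ) = 0 := by
  simp [thetaP]

lemma thetaP_zero_X_pow_succ (n : ℕ) : thetaP 0 ((X : Polynomial ℂ) ^ (n + 1)) = X ^ n := by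
  simp only [thetaP, LinearMap.coe_mk, AddHom.coe_mk, eval_pow, eval_X, map_zero, sub_zero,
    zero_pow n.succ_ne_zero]
  rw [pow_succ', mul_divByMonic_cancel_left _ monic_X]

lemma hP_X_pow (a : ℂ) (n : ℕ) : hP a ((X : Polynomial ℂ) ^ n) = a ^ n • X ^ n := by
  rw [hP, AlgHom.toLinearMap_apply, map_pow, aeval_X, mul_pow, ← C_pow, smul_eq_C_mul]

lemma HqP_one (q : ℂ) : HqP q 1 = 0 := by
  have hP_one : hP q 1 = 1 := by simpa using hP_X_pow q 0
  simp [HqP, hP_one]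

lemma HqP_X_pow_succ (q : ℂ) (n : ℕ) :
    HqP q ((X : Polynomial ℂ) ^ (n + 1)) = ((q - 1)⁻¹ * (q ^ (n + 1) - 1)) • X ^ n := by
  simp only [HqP, LinearMap.smul_apply, LinearMap.comp_apply, LinearMap.sub_apply,
    LinearMap.id_apply, hP_X_pow]
  have hdiff : q ^ (n + 1) • (X : Polynomial ℂ) ^ (n + 1) - X ^ (n + 1)
      = (q ^ (n + 1) - 1) • X ^ (n + 1) := by
    rw [sub_smul, one_smul]
  rw [hdiff, map_smul, thetaP_zero_X_pow_succ, smul_smul]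

lemma HqF_one (q : ℂ) (u : PForm) : HqF q u 1 = 0 := by
  simp [HqF, HqP_one]

lemma HqF_X_pow_succ (q : ℂ) (u : PForm) (n : ℕ) :
    HqF q u (X ^ (n + 1)) = -((q - 1)⁻¹ * (q ^ (n + 1) - 1)) * u (X ^ n) := by
  simp [HqF, HqP_X_pow_succ]

lemma hF_X_pow (a : ℂ) (u : PForm) (n : ℕ) : hF a u (X ^ n) = a ^ n * u (X ^ n) := by
  simp [hF, hP_X_pow]

lemma Sf_coeff_natCast (u : PForm) (n : ℕ) :
    (Sf u).coeff (n : ℤ) = if n = 0 then 0 else -u (X ^ (n - 1)) := by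
  rw [Sf, HahnSeries.ofPowerSeries_apply_coeff, PowerSeries.coeff_mk]

lemma Sf_coeff_of_nonpos (u : PForm) {k : ℤ} (hk : k ≤ 0) : (Sf u).coeff k = 0 := by
  obtain rfl | hk := hk.eq_or_lt
  · simpa using Sf_coeff_natCast u 0
  · rw [Sf, HahnSeries.ofPowerSeries_apply]
    exact HahnSeries.embDomain_of_notMem_range fun ⟨n, hn⟩ => by
      have : (n : ℤ) = k := hn
      omega

lemma Sf_coeff_natCast_add_one (u : PForm) (n : ℕ) :
    (Sf u).coeff ((n : ℤ) + 1) = -u (X ^ n) := by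
  simpa using Sf_coeff_natCast u (n + 1)

lemma hLS_coeff (a : ℂ) (F : LaurentSeries ℂ) (k : ℤ) :
    (hLS a F).coeff k = a ^ (-k) * F.coeff k :=
  rfl

lemma HqLS_coeff_add_one (q : ℂ) (F : LaurentSeries ℂ) (k : ℤ) :
    (HqLS q F).coeff (k + 1) = (q - 1)⁻¹ * (q ^ (-k) * F.coeff k - F.coeff k) := by
  rw [HqLS, HahnSeries.coeff_single_mul_add, HahnSeries.coeff_sub, hLS_coeff]

lemma inv_zpow_neg_natCast_add_one (a : ℂ) (n : ℕ) : a⁻¹ ^ (-((n : ℤ) + 1)) = a ^ (n + 1) := by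
  rw [inv_zpow', neg_neg, ← Nat.cast_succ, zpow_natCast]

lemma LaurentSeries.ext_of_nonpos_of_natCast_add_one {R : Type*} [Zero R]
    {F G : LaurentSeries R} (hnonpos : ∀ k ≤ 0, F.coeff k = G.coeff k)
    (hpos : ∀ n : ℕ, F.coeff ((n : ℤ) + 1) = G.coeff ((n : ℤ) + 1)) : F = G := by
  ext k
  rcases le_or_gt k 0 with hk | hk
  · exact hnonpos k hk
  · obtain ⟨n, rfl⟩ : ∃ n : ℕ, k = (n : ℤ) + 1 := ⟨(k - 1).toNat, by omega⟩
    exact hpos n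

lemma hLS_inv_Sf (a : ℂ) (u : PForm) : hLS a⁻¹ (Sf u) = a • Sf (hF a u) := by
  refine LaurentSeries.ext_of_nonpos_of_natCast_add_one (fun k hk => ?_) fun n => ?_
  · simp [hLS_coeff, Sf_coeff_of_nonpos _ hk]
  · rw [HahnSeries.coeff_smul, hLS_coeff, Sf_coeff_natCast_add_one, Sf_coeff_natCast_add_one,
      inv_zpow_neg_natCast_add_one, hF_X_pow, smul_eq_mul]
    ring

lemma Sf_HqF {q : ℂ} (hq : q ≠ 0) (u : PForm) : Sf (HqF q u) = q⁻¹ • HqLS q⁻¹ (Sf u) := by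
  refine LaurentSeries.ext_of_nonpos_of_natCast_add_one (fun k hk => ?_) fun n => ?_
  · have hk1 : (Sf u).coeff (k - 1) = 0 := Sf_coeff_of_nonpos _ (by omega)
    rw [HahnSeries.coeff_smul, Sf_coeff_of_nonpos _ hk, ← sub_add_cancel k 1, HqLS_coeff_add_one,
      hk1]
    simp
  · rw [HahnSeries.coeff_smul, HqLS_coeff_add_one, Sf_coeff_natCast_add_one]
    cases n with
    | zero => simp [HqF_one, Sf_coeff_of_nonpos]
    | succ m =>
      have hscale : q⁻¹ * (q⁻¹ - 1)⁻¹ = -(q - 1)⁻¹ := by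
        rw [← mul_inv, mul_sub, mul_inv_cancel₀ hq, mul_one, ← inv_neg, neg_sub]
      rw [HqF_X_pow_succ, Nat.cast_succ, Sf_coeff_natCast_add_one, inv_zpow_neg_natCast_add_one,
        smul_eq_mul, ← mul_assoc, hscale]
      ring

theorem stieltjes_Hq_general (q : ℂ) (hq0 : q ≠ 0)
    (u : PForm) :
    Sf (HqF q u) = q⁻¹ • HqLS q⁻¹ (Sf u) ∧ hLS q⁻¹ (Sf u) = q • Sf (hF q u) :=
  ⟨Sf_HqF hq0 u, hLS_inv_Sf q u⟩

/-- `S(H_q u)(z) = q⁻¹ (H_{q⁻¹}(S(u)))(z)` and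
`(h_{q⁻¹}S(u))(z) = q S(h_q u)(z)`. -/
theorem stieltjes_Hq (q : ℂ) (hq0 : q ≠ 0) (hq : ∀ n : ℕ, 1 ≤ n → q ^ n ≠ 1)
    (u : PForm) :
    Sf (HqF q u) = q⁻¹ • HqLS q⁻¹ (Sf u) ∧ hLS q⁻¹ (Sf u) = q • Sf (hF q u) :=
  stieltjes_Hq_general q hq0 u

end QLH

end
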